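/- arXiv:1710.07133 — 2 statements merged into one kernel-verified Lean document; each statement's English description precedes it below -/
import Mathlib

section
/- Let Λ > 0 and let (μ, P, H) be an admissible triple in ℝ³ with μ ≠ 0 whose support is compact and connected, and let d = diam(supp μ) > 0. Writing W(μ) = ∫ |H|² dμ and W_Λ(μ) = W(μ) − Λ μ(ℝ³), the following three inequalities hold: (1) W_Λ(μ) ≥ μ(ℝ³) (1/d² − Λ); (2) W_Λ(μ) ≥ W(μ) (1 − Λ d²); (4) W(μ)/μ(ℝ³) ≥ 1/d². -/
open MeasureTheory Metric Filter
open scoped RealInnerProductSpace ENNReal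

noncomputable section

/-- Euclidean three-space. -/
abbrev E3 : Type := EuclideanSpace ℝ (Fin 3)

/-- The support of a measure: points all of whose neighbourhoods have positive measure. -/
def mSupport (μ : Measure E3) : Set E3 := {x | ∀ r > 0, 0 < μ (ball x r)}

/-- An admissible triple `(μ, P, H)`: a finite compactly supported Borel measure, a measurable
family of maps which μ-a.e. are orthogonal projections onto 2-dimensional planes (idempotent,
symmetric, of rank two), and an `L²(μ)` generalized mean curvature `H` satisfying the first
variation identity `∫ trace(P x ∘ DX x) dμ = -2 ∫ ⟨X x, H x⟩ dμ` for every compactly supported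
`C¹` vector field `X`. -/
structure IsAdmissible (μ : Measure E3) (P : E3 → E3 →L[ℝ] E3) (H : E3 → E3) : Prop where
  finite : IsFiniteMeasure μ
  compact_support : IsCompact (mSupport μ)
  meas_P : ∀ v : E3, Measurable fun x => P x v
  meas_H : AEStronglyMeasurable H μ
  proj_ae : ∀ᵐ x ∂μ, (P x).comp (P x) = P x ∧
      (∀ u v : E3, ⟪P x u, v⟫ = ⟪u, P x v⟫) ∧
      Module.finrank ℝ (LinearMap.range ((P x : E3 →ₗ[ℝ] E3))) = 2
  memL2 : MemLp H 2 μ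
  first_variation : ∀ X : E3 → E3, ContDiff ℝ 1 X → HasCompactSupport X →
      ∫ x, LinearMap.trace ℝ E3 ((P x).comp (fderiv ℝ X x) : E3 →ₗ[ℝ] E3) ∂μ
        = -2 * ∫ x, ⟪X x, H x⟫ ∂μ

/-- The generalized mean curvature is perpendicular: `(P x) (H x) = 0` for μ-a.e. `x`. -/
def IsPerp (μ : Measure E3) (P : E3 → E3 →L[ℝ] E3) (H : E3 → E3) : Prop :=
  ∀ᵐ x ∂μ, P x (H x) = 0

/-- The Willmore energy of an admissible triple. -/
def Willmore (μ : Measure E3) (H : E3 → E3) : ℝ := ∫ x, ‖H x‖ ^ 2 ∂μ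

/-- The mass of a measure. -/
def Mass (μ : Measure E3) : ℝ := (μ Set.univ).toReal

/-!
Testing the first variation identity against the position field `x ↦ x - x₀`, cut off far from
the support, turns its left side into `∫ trace (P x) dμ = 2 μ(ℝ³)`, so that
`μ(ℝ³) = ∫ ⟪x₀ - x, H x⟫ dμ`. If the support lies within distance `r` of `x₀`, the integrand is
at most `r ‖H x‖ ≤ (1 + r² ‖H x‖²) / 2`, whence `μ(ℝ³) ≤ r² W(μ)`. With `x₀` in the support,
`r = d`, and all three inequalities are rearrangements of `μ(ℝ³) ≤ d² W(μ)`.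
-/

open scoped Topology

theorem LinearMap.trace_eq_finrank_range_of_isIdempotentElem {K M : Type*} [Field K]
    [AddCommGroup M] [Module K M] [FiniteDimensional K M] {f : M →ₗ[K] M}
    (hf : IsIdempotentElem f) : LinearMap.trace K M f = Module.finrank K (LinearMap.range f) :=
  ((LinearMap.isProj_range_iff_isIdempotentElem f).2 hf).trace

theorem exists_contDiff_hasCompactSupport_eventuallyEq_sub {E : Type*} [NormedAddCommGroup E]
    [NormedSpace ℝ E] [FiniteDimensional ℝ E] {s : Set E} (hs : Bornology.IsBounded s) (x₀ : E) :
    ∃ X : E → E, ContDiff ℝ 1 X ∧ HasCompactSupport X ∧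
      ∀ x ∈ s, X =ᶠ[𝓝 x] fun y => y - x₀ := by
  obtain ⟨R, hR0, hsR⟩ := hs.subset_ball_lt 0 x₀
  let φ : ContDiffBump x₀ := ⟨R, R + 1, hR0, by linarith⟩
  refine ⟨fun y => φ y • (y - x₀), φ.contDiff.smul (contDiff_id.sub contDiff_const),
    φ.hasCompactSupport.smul_right, fun x hx => ?_⟩
  filter_upwards [isOpen_ball.mem_nhds (hsR hx)] with y hy
  simp [φ.one_of_mem_closedBall (ball_subset_closedBall hy)]

lemma measure_compl_mSupport (μ : Measure E3) : μ (mSupport μ)ᶜ = 0 := by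
  refine measure_null_of_locally_null _ fun x hx => ?_
  simp only [mSupport, Set.mem_compl_iff, Set.mem_ofPred_eq, not_forall, not_lt,
    nonpos_iff_eq_zero] at hx
  obtain ⟨r, hr, hr0⟩ := hx
  exact ⟨ball x r, mem_nhdsWithin_of_mem_nhds (ball_mem_nhds x hr), hr0⟩

lemma ae_mem_mSupport (μ : Measure E3) : ∀ᵐ x ∂μ, x ∈ mSupport μ :=
  measure_compl_mSupport μ

lemma mSupport_nonempty {μ : Measure E3} (hμ : μ ≠ 0) : (mSupport μ).Nonempty :=
  Set.nonempty_iff_ne_empty.2 fun h =>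
    hμ (Measure.measure_univ_eq_zero.1 (by simpa [h] using measure_compl_mSupport μ))

namespace IsAdmissible

variable {μ : Measure E3} {P : E3 → E3 →L[ℝ] E3} {H : E3 → E3}

lemma ae_trace_eq_two (hadm : IsAdmissible μ P H) :
    ∀ᵐ x ∂μ, LinearMap.trace ℝ E3 (P x : E3 →ₗ[ℝ] E3) = 2 := by
  filter_upwards [hadm.proj_ae] with x hx
  obtain ⟨hidem, -, hrank⟩ := hx
  have hf : IsIdempotentElem (P x : E3 →ₗ[ℝ] E3) :=
    congrArg ContinuousLinearMap.toLinearMap hidem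
  rw [LinearMap.trace_eq_finrank_range_of_isIdempotentElem hf, hrank]
  norm_num

lemma mass_eq_integral_inner (hadm : IsAdmissible μ P H) (x₀ : E3) :
    Mass μ = ∫ x, ⟪x₀ - x, H x⟫ ∂μ := by
  obtain ⟨X, hX, hXc, hXeq⟩ :=
    exists_contDiff_hasCompactSupport_eventuallyEq_sub hadm.compact_support.isBounded x₀
  have htrace : ∀ᵐ x ∂μ,
      LinearMap.trace ℝ E3 ((P x).comp (fderiv ℝ X x) : E3 →ₗ[ℝ] E3) = 2 := by
    filter_upwards [ae_mem_mSupport μ, hadm.ae_trace_eq_two] with x hx htr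
    rwa [(hXeq x hx).fderiv_eq, fderiv_sub_const, fderiv_fun_id, ContinuousLinearMap.comp_id]
  have hinner : ∀ᵐ x ∂μ, ⟪X x, H x⟫ = -⟪x₀ - x, H x⟫ := by
    filter_upwards [ae_mem_mSupport μ] with x hx
    rw [(hXeq x hx).eq_of_nhds, ← inner_neg_left, neg_sub]
  have hfv := hadm.first_variation X hX hXc
  rw [integral_congr_ae htrace, integral_congr_ae hinner, integral_neg, integral_const] at hfv
  simp only [smul_eq_mul] at hfv
  rw [Mass, ← measureReal_def]
  linarith

lemma mass_le_sq_mul_willmore (hadm : IsAdmissible μ P H) {x₀ : E3} {r : ℝ}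
    (hr : mSupport μ ⊆ closedBall x₀ r) : Mass μ ≤ r ^ 2 * Willmore μ H := by
  have := hadm.finite
  have hdist : ∀ᵐ x ∂μ, ‖x₀ - x‖ ≤ r := by
    filter_upwards [ae_mem_mSupport μ] with x hx
    simpa [dist_eq_norm'] using hr hx
  have hH1 : Integrable H μ := hadm.memL2.integrable one_le_two
  have hH2 : Integrable (fun x => ‖H x‖ ^ 2) μ :=
    (memLp_two_iff_integrable_sq_norm hadm.meas_H).1 hadm.memL2
  have hbound : ∀ᵐ x ∂μ, ⟪x₀ - x, H x⟫ ≤ r * ‖H x‖ := by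
    filter_upwards [hdist] with x hx
    exact (real_inner_le_norm _ _).trans (mul_le_mul_of_nonneg_right hx (norm_nonneg _))
  have hint : Integrable (fun x => ⟪x₀ - x, H x⟫) μ := by
    refine (hH1.norm.const_mul r).mono'
      ((continuous_const.sub continuous_id).aestronglyMeasurable.inner hadm.meas_H) ?_
    filter_upwards [hdist] with x hx
    exact (abs_real_inner_le_norm _ _).trans (mul_le_mul_of_nonneg_right hx (norm_nonneg _))
  -- AM-GM: `2 r ‖H x‖ ≤ 1 + (r ‖H x‖)²`.
  have hamgm : ∀ᵐ x ∂μ, ⟪x₀ - x, H x⟫ ≤ 1 / 2 + r ^ 2 / 2 * ‖H x‖ ^ 2 := by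
    filter_upwards [hbound] with x hx
    nlinarith [two_mul_le_add_sq 1 (r * ‖H x‖)]
  have hmass : Mass μ ≤ Mass μ / 2 + r ^ 2 / 2 * Willmore μ H := calc
    Mass μ = ∫ x, ⟪x₀ - x, H x⟫ ∂μ := hadm.mass_eq_integral_inner x₀
    _ ≤ ∫ x, (1 / 2 + r ^ 2 / 2 * ‖H x‖ ^ 2) ∂μ :=
      integral_mono_ae hint ((integrable_const _).add (hH2.const_mul _)) hamgm
    _ = Mass μ / 2 + r ^ 2 / 2 * Willmore μ H := by
      rw [integral_add (integrable_const _) (hH2.const_mul _), integral_const,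
        integral_const_mul, Willmore, Mass, smul_eq_mul, measureReal_def]
      ring
  linarith

end IsAdmissible

theorem connected_diameter_inequalities_general (Λ : ℝ) (hΛ : 0 < Λ)
    (μ : Measure E3) (P : E3 → E3 →L[ℝ] E3) (H : E3 → E3)
    (hadm : IsAdmissible μ P H) (hμ : μ ≠ 0)
    (d : ℝ) (hd : d = diam (mSupport μ)) (hdpos : 0 < d) :
    Willmore μ H - Λ * Mass μ ≥ Mass μ * (1 / d ^ 2 - Λ) ∧
    Willmore μ H - Λ * Mass μ ≥ Willmore μ H * (1 - Λ * d ^ 2) ∧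
    Willmore μ H / Mass μ ≥ 1 / d ^ 2 := by
  have := hadm.finite
  obtain ⟨x₀, hx₀⟩ := mSupport_nonempty hμ
  have hkey : Mass μ ≤ d ^ 2 * Willmore μ H := hadm.mass_le_sq_mul_willmore fun x hx =>
    hd ▸ mem_closedBall.2 (dist_le_diam_of_mem hadm.compact_support.isBounded hx hx₀)
  have hmass : 0 < Mass μ :=
    ENNReal.toReal_pos (Measure.measure_univ_ne_zero.2 hμ) (measure_ne_top μ _)
  have hd2 : 0 < d ^ 2 := pow_pos hdpos 2
  refine ⟨?_, ?_, ?_⟩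
  · have : Mass μ / d ^ 2 ≤ Willmore μ H := (div_le_iff₀ hd2).2 (by linarith)
    rw [mul_sub, mul_one_div]
    linarith
  · linarith [mul_le_mul_of_nonneg_left hkey hΛ.le]
  · rw [ge_iff_le, div_le_div_iff₀ hd2 hmass]
    linarith

/-- items (1), (2) and (4) of Corollary 1.9 of the paper, for a nonzero admissible
triple with compact connected support of diameter `d > 0`:
`W_Λ(μ) ≥ μ(ℝ³)(1/d² − Λ)`, `W_Λ(μ) ≥ W(μ)(1 − Λ d²)` and `W(μ)/μ(ℝ³) ≥ 1/d²`. -/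
theorem connected_diameter_inequalities (Λ : ℝ) (hΛ : 0 < Λ)
    (μ : Measure E3) (P : E3 → E3 →L[ℝ] E3) (H : E3 → E3)
    (hadm : IsAdmissible μ P H) (hμ : μ ≠ 0) (hconn : IsConnected (mSupport μ))
    (d : ℝ) (hd : d = diam (mSupport μ)) (hdpos : 0 < d) :
    Willmore μ H - Λ * Mass μ ≥ Mass μ * (1 / d ^ 2 - Λ) ∧
    Willmore μ H - Λ * Mass μ ≥ Willmore μ H * (1 - Λ * d ^ 2) ∧
    Willmore μ H / Mass μ ≥ 1 / d ^ 2 :=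
  connected_diameter_inequalities_general Λ hΛ μ P H hadm hμ d hd hdpos

end
end

section
/- Let (μ, P, H) be an admissible triple in ℝ³ with H perpendicular, let y ∈ ℝ³ and write X(x) = x − y and X^⊥(x) = X(x) − (P x)(X(x)). Then for all 0 < σ < ρ with μ(∂B_σ(y)) = 0 and μ(∂B_ρ(y)) = 0, the identity μ(B_σ(y))/σ² + ∫_{B_ρ(y) \ B_σ(y)} |H(x)/2 + X^⊥(x)/|X(x)|²|² dμ(x) = μ(B_ρ(y))/ρ² + (1/4) ∫_{B_ρ(y) \ B_σ(y)} |H|² dμ + ρ^{-2} ∫_{B_ρ(y)} ⟨X(x), H(x)⟩ dμ(x) − σ^{-2} ∫_{B_σ(y)} ⟨X(x), H(x)⟩ dμ(x) holds. -/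
open MeasureTheory Metric Filter
open scoped RealInnerProductSpace ENNReal

noncomputable section

/-! The first variation is applied to the Lipschitz field `V x = (x - y) / max r² ‖x - y‖²`.
Replacing `max s t` by `(s + t + √((t - s)² + ε)) / 2` gives `C¹` fields that are bounded, have
bounded tangential divergence, and converge together with their divergences off the sphere
`∂B_r(y)`; since that sphere is `μ`-null, dominated convergence carries the first variation
identity over to `V` (compact support of `μ` lets the test fields have unbounded support).
On `B_r(y)` the field is `X / r²`; outside it is `X / |X|²`, whose tangential divergence is
`2|X^⊥|² / |X|⁴`, and with `⟨H, X^⊥⟩ = ⟨H, X⟩` the identity says that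
`μ(B_r)/r² + r⁻² ∫_{B_r} ⟨X, H⟩ + ∫_{B_rᶜ} (|H/2 + X^⊥/|X|²|² - |H|²/4)` vanishes.
The two-radius identity is the difference of these statements at `σ` and `ρ`. -/

open Topology Set

section SmoothMax

def smoothMax (ε s t : ℝ) : ℝ := (s + t + √((t - s) ^ 2 + ε)) / 2

def smoothMaxDeriv (ε s t : ℝ) : ℝ := (1 + (t - s) / √((t - s) ^ 2 + ε)) / 2

variable {ε s t : ℝ}

lemma abs_le_sqrt_sq_add (hε : 0 ≤ ε) (u : ℝ) : |u| ≤ √(u ^ 2 + ε) := by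
  rw [← Real.sqrt_sq_eq_abs]
  exact Real.sqrt_le_sqrt (by linarith)

lemma max_eq_half_add_abs_sub (s t : ℝ) : max s t = (s + t + |t - s|) / 2 := by
  rcases le_total s t with h | h
  · rw [max_eq_right h, abs_of_nonneg (sub_nonneg.2 h)]; ring
  · rw [max_eq_left h, abs_of_nonpos (sub_nonpos.2 h)]; ring

lemma max_le_smoothMax (hε : 0 ≤ ε) : max s t ≤ smoothMax ε s t := by
  rw [max_eq_half_add_abs_sub, smoothMax]
  gcongr
  exact abs_le_sqrt_sq_add hε _

lemma smoothMax_pos (hε : 0 ≤ ε) (hs : 0 < s) : 0 < smoothMax ε s t :=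
  hs.trans_le ((le_max_left s t).trans (max_le_smoothMax hε))

lemma smoothMaxDeriv_mem_Icc (hε : 0 ≤ ε) : smoothMaxDeriv ε s t ∈ Icc 0 1 := by
  have h : |(t - s) / √((t - s) ^ 2 + ε)| ≤ 1 := by
    rw [abs_div, abs_of_nonneg (Real.sqrt_nonneg _)]
    exact div_le_one_of_le₀ (abs_le_sqrt_sq_add hε _) (Real.sqrt_nonneg _)
  rw [smoothMaxDeriv]
  constructor <;> linarith [abs_le.1 h]

lemma hasDerivAt_smoothMax (hε : 0 < ε) (s t : ℝ) :
    HasDerivAt (smoothMax ε s) (smoothMaxDeriv ε s t) t := by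
  have hsq : HasDerivAt (fun u => (u - s) ^ 2 + ε) (2 * (t - s)) t := by
    simpa using (((hasDerivAt_id t).sub_const s).pow 2).add_const ε
  have hroot_ne : √((t - s) ^ 2 + ε) ≠ 0 := by positivity
  have h : HasDerivAt (fun u => (s + u + √((u - s) ^ 2 + ε)) / 2)
      ((1 + 2 * (t - s) / (2 * √((t - s) ^ 2 + ε))) / 2) t :=
    (((hasDerivAt_id' t).const_add s).add (hsq.sqrt (by positivity))).div_const 2
  exact h.congr_deriv (by rw [smoothMaxDeriv]; field_simp)

lemma contDiff_smoothMax {n : WithTop ℕ∞} (hε : 0 < ε) (s : ℝ) :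
    ContDiff ℝ n (smoothMax ε s) := by
  unfold smoothMax
  fun_prop (disch := intro t; positivity)

lemma tendsto_sqrt_sq_add (u : ℝ) : Tendsto (fun ε => √(u ^ 2 + ε)) (𝓝 0) (𝓝 |u|) := by
  have h := ((continuous_const.add continuous_id).sqrt (f := fun ε : ℝ => u ^ 2 + ε)).tendsto 0
  rwa [add_zero, Real.sqrt_sq_eq_abs] at h

lemma tendsto_smoothMax (s t : ℝ) :
    Tendsto (fun ε => smoothMax ε s t) (𝓝 0) (𝓝 (max s t)) := by
  rw [max_eq_half_add_abs_sub]
  exact ((tendsto_sqrt_sq_add (t - s)).const_add (s + t)).div_const 2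

lemma tendsto_smoothMaxDeriv (hst : s ≠ t) :
    Tendsto (fun ε => smoothMaxDeriv ε s t) (𝓝 0) (𝓝 (if s ≤ t then 1 else 0)) := by
  have hts : t - s ≠ 0 := sub_ne_zero.2 hst.symm
  have h := (((tendsto_const_nhds (x := t - s)).div (tendsto_sqrt_sq_add (t - s))
    (abs_ne_zero.2 hts)).const_add 1).div_const 2
  have hlim : (1 + (t - s) / |t - s|) / 2 = if s ≤ t then 1 else 0 := by
    split_ifs with hle
    · rw [abs_of_pos (sub_pos.2 (lt_of_le_of_ne hle hst)), div_self hts]; norm_num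
    · rw [abs_of_neg (sub_neg.2 (not_le.1 hle)), div_neg, div_self hts]; norm_num
  exact hlim ▸ h

end SmoothMax

lemma norm_inv_smul_le_of_max_le {E : Type*} [NormedAddCommGroup E] [NormedSpace ℝ E]
    {s m : ℝ} {v : E} (hs : 0 < s) (hm : max s (‖v‖ ^ 2) ≤ m) : ‖m⁻¹ • v‖ ≤ s⁻¹ + 1 := by
  have hsm : s ≤ m := (le_max_left _ _).trans hm
  have hm0 : 0 < m := hs.trans_le hsm
  have hv : ‖v‖ ≤ 1 + m := by
    nlinarith [sq_nonneg (‖v‖ - 1), (le_max_right s (‖v‖ ^ 2)).trans hm]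
  rw [norm_smul, norm_inv, Real.norm_of_nonneg hm0.le]
  calc m⁻¹ * ‖v‖ ≤ m⁻¹ * (1 + m) := by gcongr
    _ = m⁻¹ + 1 := by field_simp
    _ ≤ s⁻¹ + 1 := by gcongr

lemma abs_two_inv_add_le {s m d p : ℝ} (hs : 0 < s) (hsm : s ≤ m) (hd : d ∈ Icc (0 : ℝ) 1)
    (hp : p ∈ Icc 0 m) : |2 * m⁻¹ + 2 * (-d / m ^ 2) * p| ≤ 2 * s⁻¹ := by
  have hm0 : 0 < m := hs.trans_le hsm
  have he0 : 0 ≤ d * p / m ^ 2 := div_nonneg (mul_nonneg hd.1 hp.1) (sq_nonneg _)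
  have he : d * p / m ^ 2 ≤ m⁻¹ := by
    rw [div_le_iff₀ (by positivity)]
    calc d * p ≤ 1 * m := mul_le_mul hd.2 hp.2 hp.1 zero_le_one
      _ = m⁻¹ * m ^ 2 := by field_simp
  have hms : m⁻¹ ≤ s⁻¹ := inv_anti₀ hs hsm
  rw [show 2 * m⁻¹ + 2 * (-d / m ^ 2) * p = 2 * (m⁻¹ - d * p / m ^ 2) by ring,
    abs_of_nonneg (by linarith)]
  linarith

section Projection

variable {F : Type*} [NormedAddCommGroup F] [InnerProductSpace ℝ F] {Q : F →L[ℝ] F}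

lemma inner_apply_self_eq_norm_sq (hidem : Q.comp Q = Q)
    (hsymm : ∀ u v, ⟪Q u, v⟫ = ⟪u, Q v⟫) (v : F) : ⟪v, Q v⟫ = ‖Q v‖ ^ 2 := by
  rw [← real_inner_self_eq_norm_sq, hsymm, ← ContinuousLinearMap.comp_apply, hidem]

lemma norm_sq_eq_norm_apply_sq_add (hidem : Q.comp Q = Q)
    (hsymm : ∀ u v, ⟪Q u, v⟫ = ⟪u, Q v⟫) (v : F) : ‖v‖ ^ 2 = ‖Q v‖ ^ 2 + ‖v - Q v‖ ^ 2 := by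
  rw [norm_sub_sq_real, inner_apply_self_eq_norm_sq hidem hsymm]
  ring

lemma inner_sub_apply_of_apply_eq_zero (hsymm : ∀ u v, ⟪Q u, v⟫ = ⟪u, Q v⟫) {h : F}
    (hh : Q h = 0) (v : F) : ⟪h, v - Q v⟫ = ⟪v, h⟫ := by
  rw [inner_sub_right, ← hsymm, hh, inner_zero_left, sub_zero, real_inner_comm]

lemma norm_half_smul_add_inv_smul_sq (hidem : Q.comp Q = Q)
    (hsymm : ∀ u v, ⟪Q u, v⟫ = ⟪u, Q v⟫) {h : F} (hh : Q h = 0) {v : F} (hv : v ≠ 0) :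
    ‖(1 / 2 : ℝ) • h + (‖v‖ ^ 2)⁻¹ • (v - Q v)‖ ^ 2
      = 1 / 4 * ‖h‖ ^ 2 + ((‖v‖ ^ 2)⁻¹ - ((‖v‖ ^ 2) ^ 2)⁻¹ * ‖Q v‖ ^ 2
        + (‖v‖ ^ 2)⁻¹ * ⟪v, h⟫) := by
  have hv2 : ‖v‖ ^ 2 ≠ 0 := by positivity
  have hperp : ‖v - Q v‖ ^ 2 = ‖v‖ ^ 2 - ‖Q v‖ ^ 2 := by
    rw [norm_sq_eq_norm_apply_sq_add hidem hsymm v]; ring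
  rw [norm_add_sq_real, norm_smul, norm_smul, inner_smul_left, inner_smul_right,
    inner_sub_apply_of_apply_eq_zero hsymm hh, mul_pow, mul_pow, hperp]
  simp only [Real.norm_eq_abs, sq_abs, conj_trivial]
  field_simp
  ring

variable [FiniteDimensional ℝ F]

lemma trace_eq_finrank_range (hidem : Q.comp Q = Q) :
    LinearMap.trace ℝ F (Q : F →ₗ[ℝ] F)
      = Module.finrank ℝ (LinearMap.range (Q : F →ₗ[ℝ] F)) := by
  refine LinearMap.IsProj.trace ⟨LinearMap.mem_range_self _, ?_⟩
  rintro _ ⟨u, rfl⟩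
  exact congr($hidem u)

lemma trace_comp_smul_add_smulRight (a : ℝ) (L : F →L[ℝ] ℝ) (w : F) :
    LinearMap.trace ℝ F (Q.comp (a • ContinuousLinearMap.id ℝ F + L.smulRight w) : F →ₗ[ℝ] F)
      = a * LinearMap.trace ℝ F (Q : F →ₗ[ℝ] F) + L (Q w) := by
  have : (Q.comp (a • ContinuousLinearMap.id ℝ F + L.smulRight w) : F →ₗ[ℝ] F)
      = a • (Q : F →ₗ[ℝ] F) + (L : F →ₗ[ℝ] ℝ).smulRight (Q w) := by
    ext v; simp
  rw [this, map_add, map_smul, LinearMap.trace_smulRight, smul_eq_mul]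
  rfl

end Projection

section Radial

variable {F : Type*} [NormedAddCommGroup F] [InnerProductSpace ℝ F]

def radialField (g : ℝ → ℝ) (y x : F) : F := g (‖x - y‖ ^ 2) • (x - y)

lemma contDiff_radialField {n : WithTop ℕ∞} {g : ℝ → ℝ} (hg : ContDiff ℝ n g) (y : F) :
    ContDiff ℝ n (radialField g y) :=
  (hg.comp ((contDiff_id.sub contDiff_const).norm_sq ℝ)).smul (contDiff_id.sub contDiff_const)

lemma hasFDerivAt_radialField {g : ℝ → ℝ} {g' : ℝ} {y x : F}
    (hg : HasDerivAt g g' (‖x - y‖ ^ 2)) :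
    HasFDerivAt (radialField g y)
      (g (‖x - y‖ ^ 2) • ContinuousLinearMap.id ℝ F
        + ((2 * g') • innerSL ℝ (x - y)).smulRight (x - y)) x := by
  have hX : HasFDerivAt (fun z : F => z - y) (ContinuousLinearMap.id ℝ F) x :=
    (hasFDerivAt_id x).sub_const y
  refine ((hg.comp_hasFDerivAt x hX.norm_sq).smul hX).congr_fderiv ?_
  ext v
  simp [mul_assoc, mul_left_comm]

end Radial

lemma measurable_of_measurable_apply {α E F : Type*} [MeasurableSpace α] [NormedAddCommGroup E]
    [NormedSpace ℝ E] [FiniteDimensional ℝ E] [NormedAddCommGroup F] [NormedSpace ℝ F]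
    [FiniteDimensional ℝ F] [MeasurableSpace F] [BorelSpace F] {φ : α → E →L[ℝ] F}
    (h : ∀ v, Measurable fun x => φ x v) : Measurable φ := by
  let b := Module.finBasis ℝ E
  have hφ : φ = fun x =>
      ∑ i, (LinearMap.toContinuousLinearMap (b.coord i)).smulRight (φ x (b i)) := by
    ext x v
    conv_lhs => rw [← b.sum_repr v, map_sum]
    simp
  rw [hφ]
  exact Finset.measurable_sum _ fun i _ =>
    (ContinuousLinearMap.smulRightL ℝ E F _).measurable.comp (h (b i))

lemma MeasureTheory.Integrable.of_tendsto_ae {α E : Type*} [MeasurableSpace α] {μ : Measure α}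
    [NormedAddCommGroup E] {F : ℕ → α → E} {f : α → E} {bound : α → ℝ}
    (hbound : Integrable bound μ) (hF : ∀ n, AEStronglyMeasurable (F n) μ)
    (hle : ∀ n, ∀ᵐ x ∂μ, ‖F n x‖ ≤ bound x)
    (hlim : ∀ᵐ x ∂μ, Tendsto (fun n => F n x) atTop (𝓝 (f x))) : Integrable f μ :=
  hbound.mono' (aestronglyMeasurable_of_tendsto_ae atTop hF hlim) <| by
    filter_upwards [ae_all_iff.2 hle, hlim] with x hxle hx
    exact le_of_tendsto' hx.norm hxle

lemma setIntegral_compl_eq_diff_add {α E : Type*} [MeasurableSpace α] {μ : Measure α}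
    [NormedAddCommGroup E] [NormedSpace ℝ E] {s t : Set α} {f : α → E} (hst : s ⊆ t)
    (ht : MeasurableSet t) (hf : IntegrableOn f sᶜ μ) :
    ∫ x in sᶜ, f x ∂μ = ∫ x in t \ s, f x ∂μ + ∫ x in tᶜ, f x ∂μ := by
  have hsplit : sᶜ = t \ s ∪ tᶜ := by
    ext x
    have := @hst x
    simp only [mem_compl_iff, mem_union, Set.mem_sdiff]
    tauto
  rw [hsplit] at hf ⊢
  exact setIntegral_union (disjoint_compl_right.mono_left sdiff_subset) ht.compl
    (hf.mono_set subset_union_left) (hf.mono_set subset_union_right)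

lemma mem_ball_iff_norm_sub_sq_lt {E : Type*} [SeminormedAddCommGroup E] {x y : E} {r : ℝ}
    (hr : 0 ≤ r) : x ∈ ball y r ↔ ‖x - y‖ ^ 2 < r ^ 2 := by
  rw [mem_ball, dist_eq_norm, pow_lt_pow_iff_left₀ (norm_nonneg _) hr two_ne_zero]

lemma ae_norm_sub_sq_ne {E : Type*} [SeminormedAddCommGroup E] [MeasurableSpace E]
    {μ : Measure E} {y : E} {r : ℝ} (hr : 0 ≤ r)
    (hnull : μ (sphere y r) = 0) : ∀ᵐ x ∂μ, ‖x - y‖ ^ 2 ≠ r ^ 2 := by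
  refine measure_mono_null (fun x hx => ?_) hnull
  rw [mem_sphere, dist_eq_norm]
  exact (pow_left_inj₀ (norm_nonneg _) hr two_ne_zero).1 (not_not.1 hx)

lemma mSupport_eq_support (μ : Measure E3) : mSupport μ = μ.support := by
  ext x
  exact (Metric.nhds_basis_ball.mem_measureSupport).symm

def tangentialDiv (P : E3 → E3 →L[ℝ] E3) (V : E3 → E3) (x : E3) : ℝ :=
  LinearMap.trace ℝ E3 ((P x).comp (fderiv ℝ V x) : E3 →ₗ[ℝ] E3)

/-- `tangentialDiv P V + 2 ⟪V, H⟫` for the Lipschitz field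
`V = radialField (fun t => (max s t)⁻¹) y`, using `-(max s t)⁻² · 𝟙[s ≤ t]` as the derivative of
`t ↦ (max s t)⁻¹`, which is correct off `t = s`. -/
def radialVariationIntegrand (P : E3 → E3 →L[ℝ] E3) (H : E3 → E3) (y : E3) (s : ℝ)
    (x : E3) : ℝ :=
  2 * (max s (‖x - y‖ ^ 2))⁻¹
    + 2 * (-(if s ≤ ‖x - y‖ ^ 2 then 1 else 0) / max s (‖x - y‖ ^ 2) ^ 2) * ‖P x (x - y)‖ ^ 2
    + 2 * ⟪radialField (fun t => (max s t)⁻¹) y x, H x⟫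

lemma radialVariationIntegrand_of_lt {P : E3 → E3 →L[ℝ] E3} {H : E3 → E3} {y x : E3} {s : ℝ}
    (h : ‖x - y‖ ^ 2 < s) :
    radialVariationIntegrand P H y s x = 2 * s⁻¹ + 2 * s⁻¹ * ⟪x - y, H x⟫ := by
  rw [radialVariationIntegrand, radialField, max_eq_left h.le, if_neg (not_le.2 h),
    real_inner_smul_left]
  ring

def monotonicityQuantity (μ : Measure E3) (P : E3 → E3 →L[ℝ] E3) (H : E3 → E3) (y : E3)
    (r : ℝ) : ℝ :=
  (μ (ball y r)).toReal / r ^ 2 + (r ^ 2)⁻¹ * ∫ x in ball y r, ⟪x - y, H x⟫ ∂μ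
    + ∫ x in (ball y r)ᶜ, ‖(1 / 2 : ℝ) • H x + (‖x - y‖ ^ 2)⁻¹ • ((x - y) - P x (x - y))‖ ^ 2 ∂μ
    - 1 / 4 * ∫ x in (ball y r)ᶜ, ‖H x‖ ^ 2 ∂μ

namespace IsAdmissible

variable {μ : Measure E3} {P : E3 → E3 →L[ℝ] E3} {H : E3 → E3}

lemma measurable_tangentialDiv (hadm : IsAdmissible μ P H) (V : E3 → E3) :
    Measurable (tangentialDiv P V) := by
  have hcomp : Measurable fun x => (P x).comp (fderiv ℝ V x) :=
    (ContinuousLinearMap.compL ℝ E3 E3 E3).continuous₂.measurable2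
      (measurable_of_measurable_apply hadm.meas_P) (measurable_fderiv ℝ V)
  exact ((LinearMap.trace ℝ E3).comp
    (ContinuousLinearMap.coeLM ℝ)).continuous_of_finiteDimensional.measurable.comp hcomp

lemma integrable_H (hadm : IsAdmissible μ P H) : Integrable H μ :=
  have := hadm.finite
  hadm.memL2.integrable one_le_two

lemma integrable_norm_sq (hadm : IsAdmissible μ P H) : Integrable (fun x => ‖H x‖ ^ 2) μ :=
  hadm.memL2.integrable_norm_pow two_ne_zero

lemma first_variation_of_contDiff (hadm : IsAdmissible μ P H) {V : E3 → E3}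
    (hV : ContDiff ℝ 1 V) : ∫ x, tangentialDiv P V x ∂μ = -2 * ∫ x, ⟪V x, H x⟫ ∂μ := by
  obtain ⟨R, hR⟩ := hadm.compact_support.isBounded.subset_ball (0 : E3)
  let ψ : ContDiffBump (0 : E3) := ⟨max R 1, max R 1 + 1, by positivity, by linarith⟩
  have hlocal : ∀ x ∈ mSupport μ, (fun z => ψ z • V z) =ᶠ[𝓝 x] V := fun x hx => by
    filter_upwards [ψ.eventuallyEq_one_of_mem_ball
      (ball_subset_ball (le_max_left R 1) (hR hx))] with z hz
    simp [hz]
  have hsupp : ∀ᵐ x ∂μ, x ∈ mSupport μ := by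
    rw [mSupport_eq_support]; exact Measure.support_mem_ae
  have hW := hadm.first_variation _ (ψ.contDiff.smul hV) ψ.hasCompactSupport.smul_right
  calc ∫ x, tangentialDiv P V x ∂μ = ∫ x, tangentialDiv P (fun z => ψ z • V z) x ∂μ := by
        refine integral_congr_ae ?_
        filter_upwards [hsupp] with x hx
        rw [tangentialDiv, tangentialDiv, (hlocal x hx).fderiv_eq]
    _ = -2 * ∫ x, ⟪ψ x • V x, H x⟫ ∂μ := hW
    _ = -2 * ∫ x, ⟪V x, H x⟫ ∂μ := by
        congr 1
        refine integral_congr_ae ?_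
        filter_upwards [hsupp] with x hx
        rw [(hlocal x hx).eq_of_nhds]

lemma first_variation_of_tendsto (hadm : IsAdmissible μ P H) {V : ℕ → E3 → E3}
    {V₀ : E3 → E3} {τ : E3 → ℝ} {C : ℝ} (hV : ∀ n, ContDiff ℝ 1 (V n))
    (hVle : ∀ n x, ‖V n x‖ ≤ C) (hdivle : ∀ n, ∀ᵐ x ∂μ, |tangentialDiv P (V n) x| ≤ C)
    (hVlim : ∀ᵐ x ∂μ, Tendsto (fun n => V n x) atTop (𝓝 (V₀ x)))
    (hdivlim : ∀ᵐ x ∂μ, Tendsto (fun n => tangentialDiv P (V n) x) atTop (𝓝 (τ x))) :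
    Integrable (fun x => τ x + 2 * ⟪V₀ x, H x⟫) μ ∧ ∫ x, (τ x + 2 * ⟪V₀ x, H x⟫) ∂μ = 0 := by
  have := hadm.finite
  set F : ℕ → E3 → ℝ := fun n x => tangentialDiv P (V n) x + 2 * ⟪V n x, H x⟫
  have hbound : Integrable (fun x => C + 2 * (C * ‖H x‖)) μ :=
    (integrable_const C).add ((hadm.integrable_H.norm.const_mul C).const_mul 2)
  have hinner_le : ∀ n x, ‖⟪V n x, H x⟫‖ ≤ C * ‖H x‖ := fun n x =>
    (norm_inner_le_norm _ _).trans (mul_le_mul_of_nonneg_right (hVle n x) (norm_nonneg _))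
  have hdiv_meas n : AEStronglyMeasurable (tangentialDiv P (V n)) μ :=
    (hadm.measurable_tangentialDiv (V n)).aestronglyMeasurable
  have hinner_meas n : AEStronglyMeasurable (fun x => ⟪V n x, H x⟫) μ :=
    (hV n).continuous.aestronglyMeasurable.inner hadm.meas_H
  have hdiv_int n : Integrable (tangentialDiv P (V n)) μ :=
    (integrable_const C).mono' (hdiv_meas n) (by simpa only [Real.norm_eq_abs] using hdivle n)
  have hinner_int n : Integrable (fun x => ⟪V n x, H x⟫) μ :=
    (hadm.integrable_H.norm.const_mul C).mono' (hinner_meas n) (.of_forall (hinner_le n))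
  have hF_meas n : AEStronglyMeasurable (F n) μ :=
    (hdiv_meas n).add ((hinner_meas n).const_mul 2)
  have hF_le n : ∀ᵐ x ∂μ, ‖F n x‖ ≤ C + 2 * (C * ‖H x‖) := by
    filter_upwards [hdivle n] with x hx
    calc ‖F n x‖ ≤ |tangentialDiv P (V n) x| + 2 * ‖⟪V n x, H x⟫‖ := by
          simpa [Real.norm_eq_abs, abs_mul] using abs_add_le _ (2 * ⟪V n x, H x⟫)
      _ ≤ C + 2 * (C * ‖H x‖) := by gcongr; exact hinner_le n x
  have hF_lim : ∀ᵐ x ∂μ, Tendsto (fun n => F n x) atTop (𝓝 (τ x + 2 * ⟪V₀ x, H x⟫)) := by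
    filter_upwards [hVlim, hdivlim] with x hVx hdivx
    exact hdivx.add ((hVx.inner tendsto_const_nhds).const_mul 2)
  have hF_int n : ∫ x, F n x ∂μ = 0 := by
    rw [integral_add (hdiv_int n) ((hinner_int n).const_mul 2), integral_const_mul,
      hadm.first_variation_of_contDiff (hV n)]
    ring
  refine ⟨hbound.of_tendsto_ae hF_meas hF_le hF_lim, tendsto_nhds_unique
    (tendsto_integral_of_dominated_convergence _ hF_meas hbound hF_le hF_lim) ?_⟩
  simp only [hF_int, tendsto_const_nhds]

lemma ae_tangentialDiv_radialField (hadm : IsAdmissible μ P H) (y : E3) {g g' : ℝ → ℝ}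
    (hg : ∀ t, HasDerivAt g (g' t) t) :
    ∀ᵐ x ∂μ, tangentialDiv P (radialField g y) x
      = 2 * g (‖x - y‖ ^ 2) + 2 * g' (‖x - y‖ ^ 2) * ‖P x (x - y)‖ ^ 2 := by
  filter_upwards [hadm.proj_ae] with x ⟨hidem, hsymm, hrank⟩
  rw [tangentialDiv, (hasFDerivAt_radialField (hg _)).fderiv, trace_comp_smul_add_smulRight,
    trace_eq_finrank_range hidem, hrank, smul_apply, innerSL_apply_apply,
    inner_apply_self_eq_norm_sq hidem hsymm, smul_eq_mul]
  push_cast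
  ring

lemma integrable_radialVariationIntegrand_and_integral_eq_zero (hadm : IsAdmissible μ P H)
    (y : E3) {s : ℝ} (hs : 0 < s) (hnull : ∀ᵐ x ∂μ, ‖x - y‖ ^ 2 ≠ s) :
    Integrable (radialVariationIntegrand P H y s) μ
      ∧ ∫ x, radialVariationIntegrand P H y s x ∂μ = 0 := by
  set ε : ℕ → ℝ := fun n => 1 / ((n : ℝ) + 1)
  have hε n : 0 < ε n := by positivity
  have hεlim : Tendsto ε atTop (𝓝 0) := tendsto_one_div_add_atTop_nhds_zero_nat
  have hmax_pos t : 0 < max s t := hs.trans_le (le_max_left _ _)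
  have hm_pos n t : 0 < smoothMax (ε n) s t := smoothMax_pos (hε n).le hs
  have hm_ge n t : max s t ≤ smoothMax (ε n) s t := max_le_smoothMax (hε n).le
  have hg n t : HasDerivAt (fun t => (smoothMax (ε n) s t)⁻¹)
      (-smoothMaxDeriv (ε n) s t / smoothMax (ε n) s t ^ 2) t :=
    (hasDerivAt_smoothMax (hε n) s t).inv (hm_pos n t).ne'
  have hdiv n := hadm.ae_tangentialDiv_radialField y (hg n)
  have hproj : ∀ᵐ x ∂μ, ‖P x (x - y)‖ ^ 2 ≤ ‖x - y‖ ^ 2 := by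
    filter_upwards [hadm.proj_ae] with x ⟨hidem, hsymm, _⟩
    rw [norm_sq_eq_norm_apply_sq_add hidem hsymm (x - y)]
    exact le_add_of_nonneg_right (sq_nonneg _)
  have hs_inv : 0 < s⁻¹ := inv_pos.2 hs
  refine hadm.first_variation_of_tendsto (C := 2 * s⁻¹ + 1)
    (V := fun n => radialField (fun t => (smoothMax (ε n) s t)⁻¹) y)
    (fun n => contDiff_radialField
      ((contDiff_smoothMax (hε n) s).inv fun t => (hm_pos n t).ne') y)
    (fun n x => (norm_inv_smul_le_of_max_le hs (hm_ge n _)).trans (by linarith))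
    (fun n => ?_) ?_ ?_
  · filter_upwards [hdiv n, hproj] with x hx hPx
    rw [hx]
    refine (abs_two_inv_add_le hs ((le_max_left _ _).trans (hm_ge n _))
      (smoothMaxDeriv_mem_Icc (hε n).le) ⟨sq_nonneg _, hPx.trans ?_⟩).trans (by linarith)
    exact (le_max_right _ _).trans (hm_ge n _)
  · filter_upwards with x
    exact ((((tendsto_smoothMax s _).comp hεlim).inv₀ (hmax_pos _).ne').smul_const (x - y))
  · filter_upwards [ae_all_iff.2 hdiv, hnull] with x hx hq
    simp only [hx]
    have hm := (tendsto_smoothMax s (‖x - y‖ ^ 2)).comp hεlim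
    have hd := (tendsto_smoothMaxDeriv hq.symm).comp hεlim
    exact ((hm.inv₀ (hmax_pos _).ne').const_mul 2).add
      (((hd.neg.div (hm.pow 2) (pow_ne_zero 2 (hmax_pos _).ne')).const_mul 2).mul_const _)

lemma measurable_apply_sub (hadm : IsAdmissible μ P H) (y : E3) :
    Measurable fun x => P x (x - y) :=
  isBoundedBilinearMap_apply.continuous.measurable2 (measurable_of_measurable_apply hadm.meas_P)
    (measurable_id.sub_const y)

lemma integrableOn_inner_ball (hadm : IsAdmissible μ P H) (y : E3) (r : ℝ) :
    IntegrableOn (fun x => ⟪x - y, H x⟫) (ball y r) μ := by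
  refine (hadm.integrable_H.norm.const_mul r).integrableOn.mono'
    ((measurable_id.sub_const y).aestronglyMeasurable.inner hadm.meas_H).restrict ?_
  rw [ae_restrict_iff' measurableSet_ball]
  filter_upwards with x hx
  rw [mem_ball, dist_eq_norm] at hx
  exact (norm_inner_le_norm _ _).trans (mul_le_mul_of_nonneg_right hx.le (norm_nonneg _))

lemma integrableOn_compl_ball (hadm : IsAdmissible μ P H) (y : E3) {r : ℝ} (hr : 0 < r) :
    IntegrableOn (fun x => ‖(1 / 2 : ℝ) • H x + (‖x - y‖ ^ 2)⁻¹ • ((x - y) - P x (x - y))‖ ^ 2)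
      (ball y r)ᶜ μ := by
  have := hadm.finite
  have hX := measurable_id.sub_const (y : E3)
  have hmeas := ((hadm.meas_H.const_smul (1 / 2 : ℝ)).add
    ((hX.norm.pow_const 2).inv.smul (hX.sub (hadm.measurable_apply_sub y))).aestronglyMeasurable)
  refine ((hadm.integrable_norm_sq.const_mul (1 / 2)).add
    (integrable_const (2 * (r ^ 2)⁻¹))).integrableOn.mono' (hmeas.norm.pow 2).restrict ?_
  rw [ae_restrict_iff' measurableSet_ball.compl]
  filter_upwards [hadm.proj_ae] with x ⟨hidem, hsymm, _⟩ hx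
  have hrx : r ^ 2 ≤ ‖x - y‖ ^ 2 := not_lt.1 ((mem_ball_iff_norm_sub_sq_lt hr.le).not.1 hx)
  have hq : 0 < ‖x - y‖ ^ 2 := (pow_pos hr 2).trans_le hrx
  have hXperp : ‖x - y - P x (x - y)‖ ^ 2 ≤ ‖x - y‖ ^ 2 := by
    rw [norm_sq_eq_norm_apply_sq_add hidem hsymm (x - y)]
    exact le_add_of_nonneg_left (sq_nonneg _)
  have hnormal : ‖(‖x - y‖ ^ 2)⁻¹ • (x - y - P x (x - y))‖ ^ 2 ≤ (r ^ 2)⁻¹ := by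
    rw [norm_smul, mul_pow, Real.norm_of_nonneg (inv_nonneg.2 hq.le)]
    calc ((‖x - y‖ ^ 2)⁻¹) ^ 2 * ‖x - y - P x (x - y)‖ ^ 2
        ≤ ((‖x - y‖ ^ 2)⁻¹) ^ 2 * ‖x - y‖ ^ 2 := by gcongr
      _ = (‖x - y‖ ^ 2)⁻¹ := by field_simp
      _ ≤ (r ^ 2)⁻¹ := inv_anti₀ (pow_pos hr 2) hrx
  rw [Real.norm_of_nonneg (sq_nonneg _)]
  calc ‖(1 / 2 : ℝ) • H x + (‖x - y‖ ^ 2)⁻¹ • (x - y - P x (x - y))‖ ^ 2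
      ≤ 2 * (‖(1 / 2 : ℝ) • H x‖ ^ 2 + ‖(‖x - y‖ ^ 2)⁻¹ • (x - y - P x (x - y))‖ ^ 2) :=
        (pow_le_pow_left₀ (norm_nonneg _) (norm_add_le _ _) 2).trans add_sq_le
    _ ≤ 1 / 2 * ‖H x‖ ^ 2 + 2 * (r ^ 2)⁻¹ := by
        rw [norm_smul, mul_pow, Real.norm_of_nonneg (by norm_num : (0 : ℝ) ≤ 1 / 2)]
        linarith

lemma ae_radialVariationIntegrand_of_le (hadm : IsAdmissible μ P H) (hperp : IsPerp μ P H)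
    (y : E3) {s : ℝ} (hs : 0 < s) :
    ∀ᵐ x ∂μ, s ≤ ‖x - y‖ ^ 2 → radialVariationIntegrand P H y s x
      = 2 * ‖(1 / 2 : ℝ) • H x + (‖x - y‖ ^ 2)⁻¹ • ((x - y) - P x (x - y))‖ ^ 2
        - 1 / 2 * ‖H x‖ ^ 2 := by
  filter_upwards [hadm.proj_ae, hperp] with x ⟨hidem, hsymm, _⟩ hPH hle
  have hX : x - y ≠ 0 := fun h => by simp [h] at hle; linarith
  rw [radialVariationIntegrand, radialField, max_eq_right hle, if_pos hle, real_inner_smul_left,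
    norm_half_smul_add_inv_smul_sq hidem hsymm hPH hX]
  ring

theorem monotonicityQuantity_eq_zero (hadm : IsAdmissible μ P H) (hperp : IsPerp μ P H)
    (y : E3) {r : ℝ} (hr : 0 < r) (hnull : μ (sphere y r) = 0) :
    monotonicityQuantity μ P H y r = 0 := by
  have := hadm.finite
  have hr2 : 0 < r ^ 2 := pow_pos hr 2
  obtain ⟨hint, hzero⟩ := hadm.integrable_radialVariationIntegrand_and_integral_eq_zero y hr2
    (ae_norm_sub_sq_ne hr.le hnull)
  have hball : ∀ x ∈ ball y r,
      radialVariationIntegrand P H y (r ^ 2) x = 2 * (r ^ 2)⁻¹ + 2 * (r ^ 2)⁻¹ * ⟪x - y, H x⟫ :=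
    fun x hx => radialVariationIntegrand_of_lt ((mem_ball_iff_norm_sub_sq_lt hr.le).1 hx)
  have hcompl : ∀ᵐ x ∂μ.restrict (ball y r)ᶜ, radialVariationIntegrand P H y (r ^ 2) x
      = 2 * ‖(1 / 2 : ℝ) • H x + (‖x - y‖ ^ 2)⁻¹ • ((x - y) - P x (x - y))‖ ^ 2
        - 1 / 2 * ‖H x‖ ^ 2 := by
    rw [ae_restrict_iff' measurableSet_ball.compl]
    filter_upwards [hadm.ae_radialVariationIntegrand_of_le hperp y hr2] with x hx hxc
    exact hx (not_lt.1 ((mem_ball_iff_norm_sub_sq_lt hr.le).not.1 hxc))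
  rw [← integral_add_compl (measurableSet_ball (x := y) (ε := r)) hint,
    setIntegral_congr_fun measurableSet_ball hball, integral_congr_ae hcompl,
    integral_add (integrable_const _) ((hadm.integrableOn_inner_ball y r).const_mul _),
    integral_sub ((hadm.integrableOn_compl_ball y hr).const_mul 2)
      (hadm.integrable_norm_sq.integrableOn.const_mul _),
    setIntegral_const, integral_const_mul, integral_const_mul, integral_const_mul, smul_eq_mul,
    measureReal_def] at hzero
  rw [monotonicityQuantity, div_eq_mul_inv]
  linarith

end IsAdmissible

/-- the two-radius monotonicity identity (Equation (1.5) of the paper). For an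
admissible triple with perpendicular mean curvature, `y ∈ ℝ³`, `X(x) = x − y`,
`X^⊥(x) = X(x) − (P x)(X(x))`, and all `0 < σ < ρ` whose boundary spheres are μ-null:
`μ(B_σ(y))/σ² + ∫_{B_ρ(y) \ B_σ(y)} |H/2 + X^⊥/|X|²|² dμ
  = μ(B_ρ(y))/ρ² + (1/4)∫_{B_ρ(y) \ B_σ(y)} |H|² dμ
    + ρ⁻² ∫_{B_ρ(y)} ⟨X, H⟩ dμ − σ⁻² ∫_{B_σ(y)} ⟨X, H⟩ dμ`. -/
theorem two_radius_monotonicity_identity (μ : Measure E3) (P : E3 → E3 →L[ℝ] E3) (H : E3 → E3)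
    (hadm : IsAdmissible μ P H) (hperp : IsPerp μ P H) (y : E3) :
    ∀ σ ρ : ℝ, 0 < σ → σ < ρ → μ (sphere y σ) = 0 → μ (sphere y ρ) = 0 →
      (μ (ball y σ)).toReal / σ ^ 2
        + ∫ x in ball y ρ \ ball y σ,
            ‖(1 / 2 : ℝ) • H x + (‖x - y‖ ^ 2)⁻¹ • ((x - y) - P x (x - y))‖ ^ 2 ∂μ
        = (μ (ball y ρ)).toReal / ρ ^ 2
          + (1 / 4 : ℝ) * ∫ x in ball y ρ \ ball y σ, ‖H x‖ ^ 2 ∂μ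
          + (ρ ^ 2)⁻¹ * ∫ x in ball y ρ, ⟪x - y, H x⟫ ∂μ
          - (σ ^ 2)⁻¹ * ∫ x in ball y σ, ⟪x - y, H x⟫ ∂μ := by
  intro σ ρ hσ hσρ hσnull hρnull
  have hQσ := hadm.monotonicityQuantity_eq_zero hperp y hσ hσnull
  have hQρ := hadm.monotonicityQuantity_eq_zero hperp y (hσ.trans hσρ) hρnull
  have hsub : ball y σ ⊆ ball y ρ := ball_subset_ball hσρ.le
  rw [monotonicityQuantity, setIntegral_compl_eq_diff_add hsub measurableSet_ball
      (hadm.integrableOn_compl_ball y hσ),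
    setIntegral_compl_eq_diff_add hsub measurableSet_ball hadm.integrable_norm_sq.integrableOn]
    at hQσ
  rw [monotonicityQuantity] at hQρ
  linarith

end
end
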